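/- Let E ⊂ ℝ^d be measurable, write E_t = E ∩ (H + t e_d) viewed as a subset of H = ℝ^{d-1} via orthogonal projection, and for ξ ∈ W = {ξ ∈ S^{d-1} : |⟨ξ,e_d⟩| ≥ 1/√d} and s ≠ t ∈ [−1,1] set B_ξ^{s,t} = P_ξ(E_s) ∩ P_ξ(E_t) ⊂ H. Then for r ≥ p ≥ 2, ( ∫_W Leb^{d-1}(B_ξ^{s,t})^{r/p} dξ )^{p/r} ≤ C |s−t|^{−(d−1)p/r} (Leb^{d-1}(E_s)·Leb^{d-1}(E_t))^{(p+r)/(2r)}, where C depends only on d, p, r. -/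

import Mathlib

open MeasureTheory Set Metric ENNReal

noncomputable section

abbrev Ed (d : ℕ) := EuclideanSpace ℝ (Fin d)

instance (d : ℕ) : MeasurableSpace (Submodule ℝ (Ed d)) := ⊤

/-- `γ` is the invariant probability measure on the Grassmannian `G(d,k)`. -/
def IsGrassmannianMeasure (d k : ℕ) (γ : Measure (Submodule ℝ (Ed d))) : Prop :=
  IsProbabilityMeasure γ ∧
    (∀ θ : Ed d ≃ₗᵢ[ℝ] Ed d,
      Measure.map (fun L => Submodule.map (θ.toLinearEquiv : Ed d →ₗ[ℝ] Ed d) L) γ = γ) ∧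
    γ {L | Module.finrank ℝ L = k}ᶜ = 0

/-- The `δ`-plate `L_δ(a)`: the `δ`-neighborhood of `(L + a) ∩ B(a, 1/2)`. -/
def plate (d : ℕ) (L : Submodule ℝ (Ed d)) (δ : ℝ) (a : Ed d) : Set (Ed d) :=
  Metric.thickening δ ({x | x - a ∈ L} ∩ Metric.closedBall a (1 / 2))

/-- The plate-average maximal operator `M^k_δ`. -/
def maxOp (d : ℕ) (δ : ℝ) (f : Ed d → ℝ≥0∞) (L : Submodule ℝ (Ed d)) : ℝ≥0∞ :=
  ⨆ a : Ed d, (volume (plate d L δ a))⁻¹ * ∫⁻ x in plate d L δ a, f x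


/-!
Write `H = (ℝ ∙ u)ᗮ`, `A = E_s`, `B = E_t` and `g = χ_A * χ_{-B}`. For `ξ` off the equator,
projecting along `ξ` onto `H` translates the slice `E_a` by `-a • w(ξ)`, where
`w(ξ) = ⟪ξ, u⟫⁻¹ • proj_H ξ` is the gnomonic projection; hence `|B_ξ^{s,t}| = g((s - t) • w(ξ))`.
Since `g ≤ (|A| |B|)^{1/2}`, the `L^{r/p}` integral is at most `(|A| |B|)^{(r/p - 1)/2}` times
`∫ g((s - t) • w(ξ)) dξ`. Polar coordinates followed by Fubini along `u` give
`∫_{S^{d-1}} h(w(ξ)) dξ ≤ 2 ∫_H h`: with `x = τ u + y` one has `w(x) = τ⁻¹ • y`, and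
`∫_{-1}^{1} |τ|^{d-1} dτ = 2/d` cancels the factor `d` of the polar formula. Rescaling by `s - t`
and `∫_H g = |A| |B|` bound the integral by `2 |s - t|^{-(d-1)} |A| |B|`; raising to the power
`p/r` gives the claim with `C = 2`.
-/

open Module RealInnerProductSpace

namespace ENNReal

theorem rpow_le_rpow_sub_one_mul {x M : ℝ≥0∞} (hxM : x ≤ M) {q : ℝ} (hq : 1 ≤ q) :
    x ^ q ≤ M ^ (q - 1) * x := by
  calc x ^ q = x ^ (q - 1) * x ^ (1 : ℝ) := by
        rw [← rpow_add_of_nonneg _ _ (by linarith) zero_le_one, sub_add_cancel]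
    _ ≤ M ^ (q - 1) * x := by
        rw [rpow_one]; gcongr

theorem sqrt_rpow_mul_mul_rpow_le {I : ℝ≥0∞} {K : ℝ} (hK : 0 ≤ K) {p r : ℝ} (hp : 0 < p)
    (hpr : p ≤ r) :
    ((I ^ (1 / 2 : ℝ)) ^ (r / p - 1) * (2 * ENNReal.ofReal K * I)) ^ (p / r)
      ≤ ENNReal.ofReal (2 * K ^ (p / r)) * I ^ ((p + r) / (2 * r)) := by
  have hr : 0 < r := hp.trans_le hpr
  have he : 0 ≤ p / r := by positivity
  have hq : 0 ≤ r / p - 1 := by rw [sub_nonneg, one_le_div hp]; exact hpr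
  calc ((I ^ (1 / 2 : ℝ)) ^ (r / p - 1) * (2 * ENNReal.ofReal K * I)) ^ (p / r)
      = (2 * ENNReal.ofReal K) ^ (p / r) * I ^ ((p + r) / (2 * r)) := by
        have hsplit : (I ^ (1 / 2 : ℝ)) ^ (r / p - 1) * (2 * ENNReal.ofReal K * I)
            = 2 * ENNReal.ofReal K * I ^ (1 / 2 * (r / p - 1) + 1) := by
          rw [← rpow_mul, rpow_add_of_nonneg _ _ (by positivity) zero_le_one, rpow_one]; ring
        rw [hsplit, mul_rpow_of_nonneg _ _ he, ← rpow_mul]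
        congr 2
        field_simp
        ring
    _ ≤ ENNReal.ofReal (2 * K ^ (p / r)) * I ^ ((p + r) / (2 * r)) := by
        rw [mul_rpow_of_nonneg _ _ he, ofReal_mul zero_le_two, ofReal_ofNat,
          ofReal_rpow_of_nonneg hK he]
        gcongr
        calc (2 : ℝ≥0∞) ^ (p / r) ≤ 2 ^ (1 : ℝ) :=
              rpow_le_rpow_of_exponent_le one_le_two ((div_le_one hr).2 hpr)
          _ = 2 := rpow_one 2

end ENNReal

namespace MeasureTheory

section Overlap

variable {G : Type*} [AddCommGroup G] [MeasurableSpace G] {μ : Measure G} {A B : Set G}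

variable (μ A B) in
/-- The convolution `χ_A * χ_{-B}` of the paper. -/
def overlap (a : G) : ℝ≥0∞ := μ ((· + a) ⁻¹' A ∩ B)

theorem overlap_le_left [MeasurableAdd G] [μ.IsAddRightInvariant] (a : G) :
    overlap μ A B a ≤ μ A :=
  (measure_mono inter_subset_left).trans_eq (measure_preimage_add_right μ a A)

theorem overlap_le_right (a : G) : overlap μ A B a ≤ μ B :=
  measure_mono inter_subset_right

theorem overlap_le_sqrt [MeasurableAdd G] [μ.IsAddRightInvariant] (a : G) :
    overlap μ A B a ≤ (μ A * μ B) ^ (1 / 2 : ℝ) := by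
  calc overlap μ A B a = (overlap μ A B a * overlap μ A B a) ^ (1 / 2 : ℝ) := by
        rw [← sq, ← ENNReal.rpow_natCast, ← ENNReal.rpow_mul]; norm_num
    _ ≤ (μ A * μ B) ^ (1 / 2 : ℝ) := by
        gcongr
        exacts [overlap_le_left a, overlap_le_right a]

theorem measure_preimage_add_inter_preimage_add [MeasurableAdd G] [μ.IsAddRightInvariant]
    (a b : G) : μ ((· + a) ⁻¹' A ∩ (· + b) ⁻¹' B) = overlap μ A B (a - b) := by
  have : (· + a) ⁻¹' A ∩ (· + b) ⁻¹' B = (· + b) ⁻¹' ((· + (a - b)) ⁻¹' A ∩ B) := by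
    ext z; simp [add_assoc]
  rw [this, measure_preimage_add_right]; rfl

variable [MeasurableAdd₂ G] [SFinite μ]

theorem measurable_overlap (hA : MeasurableSet A) (hB : MeasurableSet B) :
    Measurable (overlap μ A B) :=
  measurable_measure_prodMk_right ((measurable_add hA).inter (measurable_fst hB))

theorem lintegral_overlap [μ.IsAddLeftInvariant] (hA : MeasurableSet A) (hB : MeasurableSet B) :
    ∫⁻ a, overlap μ A B a ∂μ = μ A * μ B := by
  calc ∫⁻ a, overlap μ A B a ∂μ = μ.prod μ {q : G × G | q.1 + q.2 ∈ A ∧ q.1 ∈ B} :=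
        (Measure.prod_apply_symm ((measurable_add hA).inter (measurable_fst hB))).symm
    _ = μ.prod μ ((fun q : G × G => (q.1, q.1 + q.2)) ⁻¹' (B ×ˢ A)) := by
        congr 1; ext q; simp [and_comm]
    _ = μ A * μ B := by
        rw [(measurePreserving_prod_add μ μ).measure_preimage (hB.prod hA).nullMeasurableSet,
          Measure.prod_prod, mul_comm]

end Overlap

theorem lintegral_rpow_le_mul_lintegral {α : Type*} [MeasurableSpace α] {μ : Measure α}
    {f : α → ℝ≥0∞} (hf : AEMeasurable f μ) {M : ℝ≥0∞} (hfM : ∀ x, f x ≤ M) {q : ℝ}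
    (hq : 1 ≤ q) : ∫⁻ x, f x ^ q ∂μ ≤ M ^ (q - 1) * ∫⁻ x, f x ∂μ :=
  (lintegral_mono fun x => ENNReal.rpow_le_rpow_sub_one_mul (hfM x) hq).trans_eq
    (lintegral_const_mul'' _ hf)

theorem lintegral_Ioo_neg_one_one_abs_pow (n : ℕ) :
    ∫⁻ τ in Ioo (-1 : ℝ) 1, ENNReal.ofReal (|τ| ^ n) = ENNReal.ofReal (2 / (n + 1)) := by
  have hcont : Continuous fun τ : ℝ => |τ| ^ n := continuous_abs.pow n
  have h1 : ∫ τ in (0 : ℝ)..1, |τ| ^ n = 1 / (n + 1) := by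
    rw [intervalIntegral.integral_congr (g := fun τ => τ ^ n), integral_pow]
    · simp
    · intro τ hτ
      rw [uIcc_of_le zero_le_one] at hτ
      simp [abs_of_nonneg hτ.1]
  have h2 : ∫ τ in (-1 : ℝ)..0, |τ| ^ n = 1 / (n + 1) := by
    simpa [h1] using (intervalIntegral.integral_comp_neg (a := 0) (b := 1)
      fun τ : ℝ => |τ| ^ n).symm
  rw [← ofReal_integral_eq_lintegral_ofReal (hcont.integrableOn_Icc.mono_set Ioo_subset_Icc_self)
      (Filter.Eventually.of_forall fun τ => by positivity),
    ← integral_Ioc_eq_integral_Ioo, ← intervalIntegral.integral_of_le (by norm_num),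
    ← intervalIntegral.integral_add_adjacent_intervals (b := 0) (hcont.intervalIntegrable _ _)
      (hcont.intervalIntegrable _ _), h1, h2]
  ring_nf

section HaarMeasure

variable {E : Type*} [NormedAddCommGroup E] [NormedSpace ℝ E] [FiniteDimensional ℝ E]
  [MeasurableSpace E] [BorelSpace E] (μ : Measure E) [μ.IsAddHaarMeasure]

theorem lintegral_comp_smul {f : E → ℝ≥0∞} (hf : Measurable f) {c : ℝ} (hc : c ≠ 0) :
    ∫⁻ x, f (c • x) ∂μ = ENNReal.ofReal |(c ^ finrank ℝ E)⁻¹| * ∫⁻ x, f x ∂μ := by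
  rw [← lintegral_map hf (measurable_const_smul c), Measure.map_addHaar_smul μ hc,
    lintegral_smul_measure, smul_eq_mul]

theorem lintegral_toSphere_of_homogeneous {G : E → ℝ≥0∞} (hG : Measurable G)
    (hhom : ∀ x : E, ∀ ρ : ℝ, 0 < ρ → G (ρ • x) = G x) :
    ∫⁻ ξ, G ξ ∂μ.toSphere = finrank ℝ E * ∫⁻ x in ball 0 1, G x ∂μ := by
  rcases subsingleton_or_nontrivial E with hE | hE
  · simp [(Measure.toSphere_eq_zero_iff μ).2 hE, finrank_zero_of_subsingleton]
  have hdim : 0 < finrank ℝ E := finrank_pos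
  let one : Ioi (0 : ℝ) := ⟨1, mem_Ioi.2 one_pos⟩
  have hν : Measure.volumeIoiPow (finrank ℝ E - 1) (Iio one) = (finrank ℝ E : ℝ≥0∞)⁻¹ := by
    rw [Measure.volumeIoiPow_apply_Iio, Nat.sub_add_cancel hdim]
    simp [one, ENNReal.ofReal_inv_of_pos, hdim]
  have hpolar : ∫⁻ q : sphere (0 : E) 1 × Ioi (0 : ℝ), G q.1 * (Iio one).indicator 1 q.2
        ∂μ.toSphere.prod (Measure.volumeIoiPow (finrank ℝ E - 1))
      = ∫⁻ x in ball 0 1, G x ∂μ := by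
    have hpt (x : ({0}ᶜ : Set E)) : G (homeomorphUnitSphereProd E x).1 *
        (Iio one).indicator 1 (homeomorphUnitSphereProd E x).2 = (ball 0 1).indicator G x := by
      obtain ⟨x, hx : x ≠ 0⟩ := x
      have hG : G (‖x‖⁻¹ • x) = G x := hhom x _ (by positivity)
      by_cases hx1 : ‖x‖ < 1 <;> simp [indicator, one, ← Subtype.coe_lt_coe, hx1, hG]
    rw [← (μ.measurePreserving_homeomorphUnitSphereProd).lintegral_comp_emb
      (homeomorphUnitSphereProd E).measurableEmbedding]
    simp only [hpt]
    rw [lintegral_subtype_comap (measurableSet_singleton 0).compl (f := (ball 0 1).indicator G),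
      restrict_compl_singleton, lintegral_indicator measurableSet_ball]
  rw [← hpolar, lintegral_prod_mul (f := fun ξ : sphere (0 : E) 1 => G ξ)
    (hG.comp measurable_subtype_coe).aemeasurable
    (measurable_one.indicator measurableSet_Iio).aemeasurable,
    lintegral_indicator_one measurableSet_Iio, hν, mul_comm, mul_assoc,
    ENNReal.inv_mul_cancel (by simp [hdim.ne']) (by simp), mul_one]

end HaarMeasure

end MeasureTheory

section UnitVector

variable {F : Type*} [NormedAddCommGroup F] [InnerProductSpace ℝ F] {u : F}

theorem inner_smul_add_orthogonal (hu : ‖u‖ = 1) (τ : ℝ) (y : (ℝ ∙ u)ᗮ) :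
    ⟪τ • u + y, u⟫ = τ := by
  rw [inner_add_left, real_inner_smul_left, real_inner_self_eq_norm_sq, hu,
    Submodule.inner_left_of_mem_orthogonal (Submodule.mem_span_singleton_self u) y.2]
  ring

/-- The point where the line `ℝ • x` meets the affine hyperplane `u + (ℝ ∙ u)ᗮ`, read in
`(ℝ ∙ u)ᗮ`; its junk value is `0` when `x ⟂ u`. -/
def gnomonicProj (u x : F) : (ℝ ∙ u)ᗮ := ⟪x, u⟫⁻¹ • (ℝ ∙ u)ᗮ.orthogonalProjectionOnto x

theorem gnomonicProj_smul_add (hu : ‖u‖ = 1) (τ : ℝ) (y : (ℝ ∙ u)ᗮ) :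
    gnomonicProj u (τ • u + y) = τ⁻¹ • y := by
  simp [gnomonicProj, inner_smul_add_orthogonal hu]

theorem gnomonicProj_smul {ρ : ℝ} (hρ : ρ ≠ 0) (x : F) :
    gnomonicProj u (ρ • x) = gnomonicProj u x := by
  simp only [gnomonicProj, real_inner_smul_left, map_smul, smul_smul, mul_inv, mul_right_comm,
    inv_mul_cancel₀ hρ, one_mul]

theorem measurable_gnomonicProj [MeasurableSpace F] [BorelSpace F] :
    Measurable (gnomonicProj u) := by
  unfold gnomonicProj; fun_prop

theorem sub_div_inner_smul_eq (hu : ‖u‖ = 1) {ξ : F} (hξ : ⟪ξ, u⟫ ≠ 0) (a : ℝ)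
    (x : (ℝ ∙ u)ᗮ) :
    ((x : F) + a • u) - (⟪(x : F) + a • u, u⟫ / ⟪ξ, u⟫) • ξ
      = (x : F) - a • (gnomonicProj u ξ : F) := by
  have hξ_decomp : ξ = ⟪ξ, u⟫ • u + ((ℝ ∙ u)ᗮ.orthogonalProjectionOnto ξ : F) := by
    rw [← Submodule.starProjection_apply, real_inner_comm,
      ← Submodule.starProjection_unit_singleton ℝ hu,
      Submodule.starProjection_add_starProjection_orthogonal]
  rw [add_comm (x : F), inner_smul_add_orthogonal hu, gnomonicProj, Submodule.coe_smul]
  set c := ⟪ξ, u⟫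
  set P : F := (ℝ ∙ u)ᗮ.orthogonalProjectionOnto ξ
  rw [hξ_decomp]
  match_scalars <;> field_simp
  ring

def slice (u : F) (E : Set F) (a : ℝ) : Set (ℝ ∙ u)ᗮ := {x | (x : F) + a • u ∈ E}

theorem measurableSet_slice [MeasurableSpace F] [BorelSpace F] {E : Set F}
    (hE : MeasurableSet E) (a : ℝ) : MeasurableSet (slice u E a) :=
  hE.preimage (continuous_subtype_val.add continuous_const).measurable

theorem setOf_exists_obliqueProj_eq (hu : ‖u‖ = 1) {ξ : F} (hξ : ⟪ξ, u⟫ ≠ 0) (E : Set F)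
    (a : ℝ) :
    {z : (ℝ ∙ u)ᗮ | ∃ x : (ℝ ∙ u)ᗮ, (x : F) + a • u ∈ E ∧
        ((x : F) + a • u) - (⟪(x : F) + a • u, u⟫ / ⟪ξ, u⟫) • ξ = (z : F)}
      = (· + a • gnomonicProj u ξ) ⁻¹' slice u E a := by
  ext z
  simp only [sub_div_inner_smul_eq hu hξ, mem_ofPred_eq, mem_preimage, slice]
  constructor
  · rintro ⟨x, hx, hxz⟩
    obtain rfl : x = z + a • gnomonicProj u ξ := by
      ext; simp [← hxz]
    exact hx
  · intro hz
    exact ⟨_, hz, by simp⟩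

variable [FiniteDimensional ℝ F]

theorem finrank_orthogonal_span_unit_add_one (hu : ‖u‖ = 1) :
    finrank ℝ (ℝ ∙ u)ᗮ + 1 = finrank ℝ F := by
  rw [← (ℝ ∙ u).finrank_add_finrank_orthogonal,
    finrank_span_singleton (by simp [← norm_ne_zero_iff, hu]), add_comm]

variable [MeasurableSpace F] [BorelSpace F]

theorem volume_obliqueProj_slices_inter (hu : ‖u‖ = 1) {ξ : F} (hξ : ⟪ξ, u⟫ ≠ 0) (E : Set F)
    (s t : ℝ) :
    volume {z : (ℝ ∙ u)ᗮ |
        (∃ x : (ℝ ∙ u)ᗮ, (x : F) + s • u ∈ E ∧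
          ((x : F) + s • u) - (⟪(x : F) + s • u, u⟫ / ⟪ξ, u⟫) • ξ = (z : F)) ∧
        (∃ x : (ℝ ∙ u)ᗮ, (x : F) + t • u ∈ E ∧
          ((x : F) + t • u) - (⟪(x : F) + t • u, u⟫ / ⟪ξ, u⟫) • ξ = (z : F))}
      = overlap volume (slice u E s) (slice u E t) ((s - t) • gnomonicProj u ξ) := by
  rw [ofPred_and, setOf_exists_obliqueProj_eq hu hξ, setOf_exists_obliqueProj_eq hu hξ,
    measure_preimage_add_inter_preimage_add, sub_smul]

theorem measurePreserving_smul_add_orthogonal (hu : ‖u‖ = 1) :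
    MeasurePreserving (fun q : ℝ × (ℝ ∙ u)ᗮ => q.1 • u + q.2) (volume.prod volume) volume := by
  have h : (fun q : ℝ × (ℝ ∙ u)ᗮ => q.1 • u + q.2) = (ℝ ∙ u).orthogonalDecomposition.symm ∘
      WithLp.toLp 2 ∘ Prod.map (LinearIsometryEquiv.toSpanUnitSingleton u hu) id := by
    funext q; simp
  rw [h]
  exact (ℝ ∙ u).orthogonalDecomposition.symm.measurePreserving.comp
    ((WithLp.volume_preserving_toLp _ _).comp
      ((LinearIsometryEquiv.toSpanUnitSingleton u hu).measurePreserving.prod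
        (MeasurePreserving.id volume)))

theorem lintegral_eq_lintegral_smul_add_orthogonal (hu : ‖u‖ = 1) {f : F → ℝ≥0∞}
    (hf : Measurable f) : ∫⁻ x, f x = ∫⁻ τ : ℝ, ∫⁻ y : (ℝ ∙ u)ᗮ, f (τ • u + y) := by
  have h := measurePreserving_smul_add_orthogonal hu
  rw [← h.lintegral_comp hf, lintegral_prod (fun q : ℝ × (ℝ ∙ u)ᗮ => f (q.1 • u + q.2))
    (hf.comp h.measurable).aemeasurable]

theorem setLIntegral_slab_comp_gnomonicProj_le (hu : ‖u‖ = 1) {h : (ℝ ∙ u)ᗮ → ℝ≥0∞}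
    (hh : Measurable h) :
    ∫⁻ x in {x : F | ⟪x, u⟫ ∈ Ioo (-1) 1}, {x | ⟪x, u⟫ ≠ 0}.indicator (h ∘ gnomonicProj u) x
      ≤ ENNReal.ofReal (2 / (finrank ℝ (ℝ ∙ u)ᗮ + 1)) * ∫⁻ y, h y := by
  set n := finrank ℝ (ℝ ∙ u)ᗮ
  set G : F → ℝ≥0∞ := {x | ⟪x, u⟫ ≠ 0}.indicator (h ∘ gnomonicProj u)
  set slab := {x : F | ⟪x, u⟫ ∈ Ioo (-1) 1}
  have hinner : Measurable fun x : F => ⟪x, u⟫ := (continuous_id.inner continuous_const).measurable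
  have hslab : MeasurableSet slab := hinner measurableSet_Ioo
  have hGm : Measurable G :=
    (hh.comp measurable_gnomonicProj).indicator (hinner (measurableSet_singleton 0).compl)
  have hfiber (τ : ℝ) : ∫⁻ y : (ℝ ∙ u)ᗮ, slab.indicator G (τ • u + y)
      ≤ (Ioo (-1) 1).indicator (fun τ => ENNReal.ofReal (|τ| ^ n) * ∫⁻ y, h y) τ := by
    by_cases hτ : τ ∈ Ioo (-1) 1
    · rw [indicator_of_mem hτ]
      rw [mem_Ioo] at hτ
      rcases eq_or_ne τ 0 with rfl | hτ0
      · have hy (y : (ℝ ∙ u)ᗮ) : ⟪(y : F), u⟫ = 0 :=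
          Submodule.inner_left_of_mem_orthogonal (Submodule.mem_span_singleton_self u) y.2
        simp [slab, G, indicator, hy]
      calc ∫⁻ y : (ℝ ∙ u)ᗮ, slab.indicator G (τ • u + y) = ∫⁻ y, h (τ⁻¹ • y) := by
            congr 1; funext y
            simp [slab, G, indicator, inner_smul_add_orthogonal hu, gnomonicProj_smul_add hu, hτ,
              hτ0]
        _ = ENNReal.ofReal (|τ| ^ n) * ∫⁻ y, h y := by
            rw [lintegral_comp_smul _ hh (inv_ne_zero hτ0)]; simp; rfl
        _ ≤ _ := le_rfl
    · rw [mem_Ioo] at hτ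
      simp [slab, G, indicator, inner_smul_add_orthogonal hu, hτ]
  calc ∫⁻ x in slab, G x = ∫⁻ τ, ∫⁻ y : (ℝ ∙ u)ᗮ, slab.indicator G (τ • u + y) := by
        rw [← lintegral_indicator hslab,
          lintegral_eq_lintegral_smul_add_orthogonal hu (hGm.indicator hslab)]
    _ ≤ ∫⁻ τ, (Ioo (-1) 1).indicator (fun τ => ENNReal.ofReal (|τ| ^ n) * ∫⁻ y, h y) τ :=
        lintegral_mono hfiber
    _ = ENNReal.ofReal (2 / (n + 1)) * ∫⁻ y, h y := by
        rw [lintegral_indicator measurableSet_Ioo, lintegral_mul_const _ (by fun_prop),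
          lintegral_Ioo_neg_one_one_abs_pow]

theorem setLIntegral_toSphere_comp_gnomonicProj_le (hu : ‖u‖ = 1) {h : (ℝ ∙ u)ᗮ → ℝ≥0∞}
    (hh : Measurable h) :
    ∫⁻ ξ in {ξ : sphere (0 : F) 1 | ⟪(ξ : F), u⟫ ≠ 0}, h (gnomonicProj u ξ)
        ∂(volume : Measure F).toSphere ≤ 2 * ∫⁻ y, h y := by
  set n := finrank ℝ (ℝ ∙ u)ᗮ
  set G : F → ℝ≥0∞ := {x | ⟪x, u⟫ ≠ 0}.indicator (h ∘ gnomonicProj u)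
  have hinner : Measurable fun x : F => ⟪x, u⟫ := (continuous_id.inner continuous_const).measurable
  have hGm : Measurable G :=
    (hh.comp measurable_gnomonicProj).indicator (hinner (measurableSet_singleton 0).compl)
  have hGhom (x : F) (ρ : ℝ) (hρ : 0 < ρ) : G (ρ • x) = G x := by
    simp [G, indicator, real_inner_smul_left, gnomonicProj_smul hρ.ne', hρ.ne']
  have hball : ball (0 : F) 1 ⊆ {x : F | ⟪x, u⟫ ∈ Ioo (-1) 1} := fun x hx =>
    abs_lt.1 ((abs_real_inner_le_norm x u).trans_lt (by simpa [hu] using hx))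
  have hS : MeasurableSet {ξ : sphere (0 : F) 1 | ⟪(ξ : F), u⟫ ≠ 0} :=
    (hinner.comp measurable_subtype_coe) (measurableSet_singleton 0).compl
  calc ∫⁻ ξ in {ξ : sphere (0 : F) 1 | ⟪(ξ : F), u⟫ ≠ 0}, h (gnomonicProj u ξ)
        ∂(volume : Measure F).toSphere
      = ∫⁻ ξ, G ξ ∂(volume : Measure F).toSphere := by
        rw [← lintegral_indicator hS]; rfl
    _ = (n + 1) * ∫⁻ x in ball 0 1, G x := by
        rw [lintegral_toSphere_of_homogeneous _ hGm hGhom,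
          ← finrank_orthogonal_span_unit_add_one hu]
        push_cast; rfl
    _ ≤ (n + 1) * ∫⁻ x in {x : F | ⟪x, u⟫ ∈ Ioo (-1) 1}, G x := by gcongr
    _ ≤ (n + 1) * (ENNReal.ofReal (2 / (n + 1)) * ∫⁻ y, h y) := by
        gcongr; exact setLIntegral_slab_comp_gnomonicProj_le hu hh
    _ = 2 * ∫⁻ y, h y := by
        rw [← mul_assoc, ENNReal.ofReal_div_of_pos (by positivity), ENNReal.ofReal_ofNat,
          show ((n : ℝ) + 1) = ((n + 1 : ℕ) : ℝ) by push_cast; ring, ENNReal.ofReal_natCast]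
        push_cast
        rw [ENNReal.mul_div_cancel (by positivity) (by simp)]

theorem setLIntegral_toSphere_overlap_gnomonicProj_le (hu : ‖u‖ = 1) {A B : Set (ℝ ∙ u)ᗮ}
    (hA : MeasurableSet A) (hB : MeasurableSet B) {c : ℝ} (hc : c ≠ 0) :
    ∫⁻ ξ in {ξ : sphere (0 : F) 1 | ⟪(ξ : F), u⟫ ≠ 0},
        overlap volume A B (c • gnomonicProj u ξ) ∂(volume : Measure F).toSphere
      ≤ 2 * ENNReal.ofReal (|c| ^ finrank ℝ (ℝ ∙ u)ᗮ)⁻¹ * (volume A * volume B) :=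
  (setLIntegral_toSphere_comp_gnomonicProj_le hu (h := fun y => overlap volume A B (c • y))
    ((measurable_overlap hA hB).comp (measurable_const_smul c))).trans_eq <| by
    rw [lintegral_comp_smul _ (measurable_overlap hA hB) hc, lintegral_overlap hA hB, abs_inv,
      abs_pow, mul_assoc]

theorem setLIntegral_toSphere_overlap_gnomonicProj_rpow_le (hu : ‖u‖ = 1)
    {W : Set (sphere (0 : F) 1)} (hWu : W ⊆ {ξ | ⟪(ξ : F), u⟫ ≠ 0}) {A B : Set (ℝ ∙ u)ᗮ}
    (hA : MeasurableSet A) (hB : MeasurableSet B) {c : ℝ} (hc : c ≠ 0) {p r : ℝ} (hp : 0 < p)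
    (hpr : p ≤ r) :
    (∫⁻ ξ in W, overlap volume A B (c • gnomonicProj u ξ) ^ (r / p)
        ∂(volume : Measure F).toSphere) ^ (p / r)
      ≤ ENNReal.ofReal (2 * ((|c| ^ finrank ℝ (ℝ ∙ u)ᗮ)⁻¹) ^ (p / r)) *
          (volume A * volume B) ^ ((p + r) / (2 * r)) := by
  have he : 0 ≤ p / r := div_nonneg hp.le (hp.le.trans hpr)
  have hmeas : Measurable fun ξ : sphere (0 : F) 1 => overlap volume A B (c • gnomonicProj u ξ) :=
    (measurable_overlap hA hB).comp
      ((measurable_gnomonicProj.comp measurable_subtype_coe).const_smul c)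
  set I := volume A * volume B
  calc _ ≤ ((I ^ (1 / 2 : ℝ)) ^ (r / p - 1) * ∫⁻ ξ in W, overlap volume A B
          (c • gnomonicProj u ξ) ∂(volume : Measure F).toSphere) ^ (p / r) :=
        ENNReal.rpow_le_rpow (lintegral_rpow_le_mul_lintegral hmeas.aemeasurable
          (fun ξ => overlap_le_sqrt _) ((one_le_div hp).2 hpr)) he
    _ ≤ ((I ^ (1 / 2 : ℝ)) ^ (r / p - 1) *
          (2 * ENNReal.ofReal (|c| ^ finrank ℝ (ℝ ∙ u)ᗮ)⁻¹ * I)) ^ (p / r) :=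
        ENNReal.rpow_le_rpow (mul_le_mul_right ((lintegral_mono_set hWu).trans
          (setLIntegral_toSphere_overlap_gnomonicProj_le hu hA hB hc)) _) he
    _ ≤ _ := ENNReal.sqrt_rpow_mul_mul_rpow_le (by positivity) hp hpr

end UnitVector

open RealInnerProductSpace in
theorem stmt_10_general (d : ℕ) (p r : ℝ) (hp : 2 ≤ p) (hpr : p ≤ r) :
    ∃ C > (0:ℝ), ∀ (u : Ed d), ‖u‖ = 1 →
      ∀ E : Set (Ed d), MeasurableSet E →
      ∀ s t : ℝ, s ∈ Icc (-1:ℝ) 1 → t ∈ Icc (-1:ℝ) 1 → s ≠ t →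
      (∫⁻ ξ in {ξ : sphere (0 : Ed d) 1 | (1:ℝ) / Real.sqrt d ≤ |⟪(ξ : Ed d), u⟫|},
          (volume {z : ((ℝ ∙ u)ᗮ : Submodule ℝ (Ed d)) |
            (∃ x : ((ℝ ∙ u)ᗮ : Submodule ℝ (Ed d)), (x : Ed d) + s • u ∈ E ∧
              ((x : Ed d) + s • u) - (⟪(x : Ed d) + s • u, u⟫ / ⟪(ξ : Ed d), u⟫) • (ξ : Ed d)
                = (z : Ed d)) ∧
            (∃ x : ((ℝ ∙ u)ᗮ : Submodule ℝ (Ed d)), (x : Ed d) + t • u ∈ E ∧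
              ((x : Ed d) + t • u) - (⟪(x : Ed d) + t • u, u⟫ / ⟪(ξ : Ed d), u⟫) • (ξ : Ed d)
                = (z : Ed d))}) ^ (r / p)
          ∂(volume : Measure (Ed d)).toSphere) ^ (p / r)
        ≤ ENNReal.ofReal (C * |s - t| ^ (-((d:ℝ) - 1) * p / r)) *
          (volume {x : ((ℝ ∙ u)ᗮ : Submodule ℝ (Ed d)) | (x : Ed d) + s • u ∈ E} *
            volume {x : ((ℝ ∙ u)ᗮ : Submodule ℝ (Ed d)) | (x : Ed d) + t • u ∈ E})
            ^ ((p + r) / (2 * r)) := by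
  refine ⟨2, two_pos, fun u hu E hE s t _ _ hst => ?_⟩
  set W := {ξ : sphere (0 : Ed d) 1 | (1:ℝ) / Real.sqrt d ≤ |⟪(ξ : Ed d), u⟫|}
  set n := finrank ℝ (ℝ ∙ u)ᗮ
  have hdn : (d : ℝ) - 1 = n := by
    rw [← finrank_euclideanSpace_fin (𝕜 := ℝ) (n := d), ← finrank_orthogonal_span_unit_add_one hu]
    push_cast; ring
  have hWu : W ⊆ {ξ | ⟪(ξ : Ed d), u⟫ ≠ 0} := fun ξ hξ h0 => by
    have : (0 : ℝ) < 1 / Real.sqrt d := by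
      have : (0 : ℝ) < d := by linarith [n.cast_nonneg (α := ℝ)]
      positivity
    simp only [W, mem_ofPred_eq, h0, abs_zero] at hξ
    linarith
  have hW : MeasurableSet W := measurableSet_le measurable_const (by fun_prop)
  have hpow : |s - t| ^ (-((d:ℝ) - 1) * p / r) = ((|s - t| ^ n)⁻¹) ^ (p / r) := by
    rw [hdn, ← Real.rpow_natCast, ← Real.rpow_neg (abs_nonneg _), ← Real.rpow_mul (abs_nonneg _)]
    ring_nf
  rw [setLIntegral_congr_fun hW (g := fun ξ : sphere (0 : Ed d) 1 => overlap volume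
    (slice u E s) (slice u E t) ((s - t) • gnomonicProj u ξ) ^ (r / p)) fun ξ hξ => by
      rw [volume_obliqueProj_slices_inter hu (hWu hξ) E s t], hpow]
  exact setLIntegral_toSphere_overlap_gnomonicProj_rpow_le hu hWu (measurableSet_slice hE s)
    (measurableSet_slice hE t) (sub_ne_zero.2 hst) (by linarith) hpr

open RealInnerProductSpace in
/-- the key convolution/slicing estimate for the projected slices
`B_ξ^{s,t} = P_ξ(E_s) ∩ P_ξ(E_t)`. -/
theorem stmt_10 (d : ℕ) (hd : 2 ≤ d) (p r : ℝ) (hp : 2 ≤ p) (hpr : p ≤ r) :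
    ∃ C > (0:ℝ), ∀ (u : Ed d), ‖u‖ = 1 →
      ∀ E : Set (Ed d), MeasurableSet E →
      ∀ s t : ℝ, s ∈ Icc (-1:ℝ) 1 → t ∈ Icc (-1:ℝ) 1 → s ≠ t →
      (∫⁻ ξ in {ξ : sphere (0 : Ed d) 1 | (1:ℝ) / Real.sqrt d ≤ |⟪(ξ : Ed d), u⟫|},
          (volume {z : ((ℝ ∙ u)ᗮ : Submodule ℝ (Ed d)) |
            (∃ x : ((ℝ ∙ u)ᗮ : Submodule ℝ (Ed d)), (x : Ed d) + s • u ∈ E ∧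
              ((x : Ed d) + s • u) - (⟪(x : Ed d) + s • u, u⟫ / ⟪(ξ : Ed d), u⟫) • (ξ : Ed d)
                = (z : Ed d)) ∧
            (∃ x : ((ℝ ∙ u)ᗮ : Submodule ℝ (Ed d)), (x : Ed d) + t • u ∈ E ∧
              ((x : Ed d) + t • u) - (⟪(x : Ed d) + t • u, u⟫ / ⟪(ξ : Ed d), u⟫) • (ξ : Ed d)
                = (z : Ed d))}) ^ (r / p)
          ∂(volume : Measure (Ed d)).toSphere) ^ (p / r)
        ≤ ENNReal.ofReal (C * |s - t| ^ (-((d:ℝ) - 1) * p / r)) *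
          (volume {x : ((ℝ ∙ u)ᗮ : Submodule ℝ (Ed d)) | (x : Ed d) + s • u ∈ E} *
            volume {x : ((ℝ ∙ u)ᗮ : Submodule ℝ (Ed d)) | (x : Ed d) + t • u ∈ E})
            ^ ((p + r) / (2 * r)) :=
  stmt_10_general d p r hp hpr
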